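/- Let μ ∈ ℝⁿ have nonnegative components, let ν ∈ ℝ^{n×n} be full rank, and Σ := ννᵀ. Then the infimum of (α·μ)/‖αᵀν‖ over all α with nonnegative components and α ≠ 0 equals min_{i ≤ n} μ_i/√(Σ_ii). -/

import Mathlib

/-!
Write `‖·‖` for the Euclidean norm and `νᵢ` for the rows of `ν`, so that `√Σᵢᵢ = ‖νᵢ‖` and
`αᵀν = ∑ αᵢ νᵢ`. For `α ≥ 0` the triangle inequality gives `‖αᵀν‖ ≤ ∑ αᵢ ‖νᵢ‖`, and with
`m = minᵢ μᵢ / ‖νᵢ‖ ≥ 0` this yields `m ‖αᵀν‖ ≤ ∑ αᵢ m ‖νᵢ‖ ≤ α · μ`. The bound is attained at the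
coordinate vector of a minimising index.
-/

open Matrix

noncomputable def enorm {n : ℕ} (x : Fin n → ℝ) : ℝ := Real.sqrt (x ⬝ᵥ x)

noncomputable def tvsObj {n : ℕ} (μ : Fin n → ℝ) (ν : Matrix (Fin n) (Fin n) ℝ)
    (α : Fin n → ℝ) : ℝ := (α ⬝ᵥ μ) / _root_.enorm (vecMul α ν)

lemma enorm_eq_norm_toLp {n : ℕ} (x : Fin n → ℝ) : _root_.enorm x = ‖WithLp.toLp 2 x‖ := by
  rw [norm_eq_sqrt_real_inner, EuclideanSpace.inner_eq_star_dotProduct, star_trivial]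
  rfl

lemma enorm_pos_of_ne_zero {n : ℕ} {x : Fin n → ℝ} (hx : x ≠ 0) : 0 < _root_.enorm x := by
  rw [enorm_eq_norm_toLp]
  exact norm_pos_iff.mpr fun h => hx (by simpa using congrArg WithLp.ofLp h)

lemma enorm_row_eq_sqrt_mul_transpose {m : Type*} [Fintype m] {n : ℕ}
    (ν : Matrix m (Fin n) ℝ) (i : m) : _root_.enorm (ν i) = √((ν * νᵀ) i i) := by
  rw [mul_apply']
  rfl

lemma enorm_vecMul_le_sum {m : Type*} [Fintype m] {n : ℕ} (ν : Matrix m (Fin n) ℝ)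
    {α : m → ℝ} (hα : ∀ i, 0 ≤ α i) :
    _root_.enorm (α ᵥ* ν) ≤ ∑ i, α i * _root_.enorm (ν i) := by
  simp only [enorm_eq_norm_toLp, vecMul_eq_sum, WithLp.toLp_sum, WithLp.toLp_smul]
  refine (norm_sum_le _ _).trans_eq (Finset.sum_congr rfl fun i _ => ?_)
  rw [norm_smul, Real.norm_of_nonneg (hα i)]

lemma mul_enorm_vecMul_le_dotProduct {m : Type*} [Fintype m] {n : ℕ} {μ : m → ℝ}
    {ν : Matrix m (Fin n) ℝ} {c : ℝ} (hc : 0 ≤ c) (hcμ : ∀ i, c * _root_.enorm (ν i) ≤ μ i)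
    {α : m → ℝ} (hα : ∀ i, 0 ≤ α i) : c * _root_.enorm (α ᵥ* ν) ≤ α ⬝ᵥ μ :=
  calc c * _root_.enorm (α ᵥ* ν) ≤ c * ∑ i, α i * _root_.enorm (ν i) :=
        mul_le_mul_of_nonneg_left (enorm_vecMul_le_sum ν hα) hc
    _ = ∑ i, α i * (c * _root_.enorm (ν i)) := by
        rw [Finset.mul_sum]
        exact Finset.sum_congr rfl fun i _ => by ring
    _ ≤ α ⬝ᵥ μ := Finset.sum_le_sum fun i _ => mul_le_mul_of_nonneg_left (hcμ i) (hα i)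

lemma tvsObj_single {n : ℕ} (μ : Fin n → ℝ) (ν : Matrix (Fin n) (Fin n) ℝ) (i : Fin n) :
    tvsObj μ ν (Pi.single i 1) = μ i / _root_.enorm (ν i) := by
  rw [tvsObj, single_one_vecMul, single_dotProduct, one_mul, row_def]

lemma isLeast_tvsObj {n : ℕ} (hn : Nonempty (Fin n)) {μ : Fin n → ℝ} (hμ : ∀ i, 0 ≤ μ i)
    {ν : Matrix (Fin n) (Fin n) ℝ} (hν : Function.Injective (· ᵥ* ν)) :
    IsLeast {r : ℝ | ∃ α : Fin n → ℝ, (∀ i, 0 ≤ α i) ∧ α ≠ 0 ∧ tvsObj μ ν α = r}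
      (Finset.univ.inf' (Finset.univ_nonempty_iff.mpr hn) fun i => μ i / _root_.enorm (ν i)) := by
  set c := Finset.univ.inf' (Finset.univ_nonempty_iff.mpr hn) fun i => μ i / _root_.enorm (ν i)
  have hvecMul_ne {α : Fin n → ℝ} (hα : α ≠ 0) : α ᵥ* ν ≠ 0 :=
    fun h => hα (hν (by simpa using h))
  have hrow (i : Fin n) : 0 < _root_.enorm (ν i) := by
    have hsingle : (Pi.single i 1 : Fin n → ℝ) ≠ 0 := by simp
    simpa [single_one_vecMul, row_def] using enorm_pos_of_ne_zero (hvecMul_ne hsingle)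
  obtain ⟨i₀, -, hi₀⟩ := Finset.exists_mem_eq_inf' (Finset.univ_nonempty_iff.mpr hn)
    fun i => μ i / _root_.enorm (ν i)
  refine ⟨⟨Pi.single i₀ 1, fun i => by simp [Pi.single_apply, apply_ite], by simp, ?_⟩, ?_⟩
  · rw [tvsObj_single]
    exact hi₀.symm
  rintro _ ⟨α, hα, hα0, rfl⟩
  have hc : 0 ≤ c := Finset.le_inf' _ _ fun i _ => div_nonneg (hμ i) (hrow i).le
  have hcμ (i : Fin n) : c * _root_.enorm (ν i) ≤ μ i :=
    (le_div_iff₀ (hrow i)).mp (Finset.inf'_le _ (Finset.mem_univ i))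
  rw [tvsObj, le_div_iff₀ (enorm_pos_of_ne_zero (hvecMul_ne hα0))]
  exact mul_enorm_vecMul_le_dotProduct hc hcμ hα

theorem stmt2 {n : ℕ} (hn : 0 < n) (μ : Fin n → ℝ) (hμ : ∀ i, 0 ≤ μ i)
    (ν : Matrix (Fin n) (Fin n) ℝ) (hν : IsUnit ν.det)
    (Sig : Matrix (Fin n) (Fin n) ℝ) (hSig : Sig = ν * νᵀ) :
    sInf {r : ℝ | ∃ α : Fin n → ℝ, (∀ i, 0 ≤ α i) ∧ α ≠ 0 ∧ tvsObj μ ν α = r}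
      = Finset.univ.inf' (Finset.univ_nonempty_iff.mpr ⟨⟨0, hn⟩⟩)
          (fun i => μ i / Real.sqrt (Sig i i)) := by
  subst hSig
  simp only [← enorm_row_eq_sqrt_mul_transpose]
  exact (isLeast_tvsObj ⟨⟨0, hn⟩⟩ hμ
    (vecMul_injective_iff_isUnit.mpr ((isUnit_iff_isUnit_det ν).mpr hν))).csInf_eq
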